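/- arXiv:0706.2636 — 2 statements merged into one kernel-verified Lean document; each statement's English description precedes it below -/
import Mathlib

section
/- For H ∈ (1/2,1), n ∈ ℕ, Δ = 1/n, and any j, the diagonal integral ∫_{t_j}^{t_{j+1}} ∫_{t_j}^{t_{j+1}} θ(s₁,s₂) ds₂ ds₁ = [1/(2H+1) − 1/((2H+2)(2H+1)) − 1/4] · n^{−2H−2}, where θ(s₁,s₂) = −(1/4)Δ^{2H} + (1/4)[(s₂−t_j)^{2H} + (t_{j+1}−s₂)^{2H} + (s₁−t_j)^{2H} + (t_{j+1}−s₁)^{2H}] − (1/2)|s₁−s₂|^{2H}. -/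
/-!
The function `θ` splits into a constant, a function of `s₁` alone, a function of `s₂` alone and
`-½|s₁ - s₂|^{2H}`. So the double integral reduces to `∫ (s - t_j)^{2H} ds = Δ^{2H+1}/(2H+1)` and to
the inner integral of `|s₁ - s₂|^{2H}`, which is computed by splitting `[t_j, t_{j+1}]` at `s₁`.
-/

open intervalIntegral Set

/-- The paper's `θ(s₁, s₂)` on `[a, b] = [t_j, t_{j+1}]` with `r = 2H`: the covariance of
`(B_a + B_b)/2 - B_{s₁}` and `(B_a + B_b)/2 - B_{s₂}` for a fractional Brownian motion `B`. -/
noncomputable def midpointCov (a b r s₁ s₂ : ℝ) : ℝ :=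
  -(1/4) * (b - a) ^ r + (1/4) * ((s₂ - a) ^ r + (b - s₂) ^ r + (s₁ - a) ^ r + (b - s₁) ^ r)
    - (1/2) * |s₁ - s₂| ^ r

section

variable {a b r : ℝ}

lemma integral_sub_const_rpow (hr : -1 < r) :
    ∫ s in a..b, (s - a) ^ r = (b - a) ^ (r + 1) / (r + 1) := by
  rw [integral_comp_sub_right (· ^ r), sub_self, integral_rpow (Or.inl hr),
    Real.zero_rpow (by linarith), sub_zero]

lemma integral_const_sub_rpow (hr : -1 < r) :
    ∫ s in a..b, (b - s) ^ r = (b - a) ^ (r + 1) / (r + 1) := by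
  rw [integral_comp_sub_left (· ^ r), sub_self, integral_rpow (Or.inl hr),
    Real.zero_rpow (by linarith), sub_zero]

lemma integral_abs_const_sub_rpow {c : ℝ} (hr : 0 ≤ r) (hc : c ∈ Icc a b) :
    ∫ s in a..b, |c - s| ^ r = ((c - a) ^ (r + 1) + (b - c) ^ (r + 1)) / (r + 1) := by
  have hcont : Continuous fun s : ℝ => |c - s| ^ r := by
    fun_prop (disch := linarith)
  have left : ∫ s in a..c, |c - s| ^ r = ∫ s in a..c, (c - s) ^ r :=
    integral_congr fun s hs => by
      rw [uIcc_of_le hc.1] at hs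
      simp only [abs_of_nonneg (sub_nonneg.2 hs.2)]
  have right : ∫ s in c..b, |c - s| ^ r = ∫ s in c..b, (s - c) ^ r :=
    integral_congr fun s hs => by
      rw [uIcc_of_le hc.2] at hs
      simp only [abs_sub_comm c, abs_of_nonneg (sub_nonneg.2 hs.1)]
  rw [← integral_add_adjacent_intervals (hcont.intervalIntegrable a c)
    (hcont.intervalIntegrable c b), left, right, integral_const_sub_rpow (by linarith),
    integral_sub_const_rpow (by linarith), add_div]

lemma integral_midpointCov_snd {s₁ : ℝ} (hr : 0 ≤ r) (hs₁ : s₁ ∈ Icc a b) :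
    ∫ s₂ in a..b, midpointCov a b r s₁ s₂ =
      (b - a) * (-(1/4) * (b - a) ^ r + (1/4) * ((s₁ - a) ^ r + (b - s₁) ^ r))
        + (b - a) ^ (r + 1) / (r + 1) / 2
        - ((s₁ - a) ^ (r + 1) + (b - s₁) ^ (r + 1)) / (r + 1) / 2 := by
  unfold midpointCov
  rw [integral_sub, integral_add, integral_const_mul, integral_const_mul, integral_const_mul,
    integral_add, integral_add, integral_add, integral_const, integral_const, integral_const,
    integral_sub_const_rpow (by linarith), integral_const_sub_rpow (by linarith),
    integral_abs_const_sub_rpow hr hs₁, smul_eq_mul, smul_eq_mul, smul_eq_mul]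
  · ring
  all_goals
    apply Continuous.intervalIntegrable
    fun_prop (disch := linarith)

lemma integral_integral_midpointCov (hr : 0 ≤ r) (hab : a ≤ b) :
    ∫ s₁ in a..b, ∫ s₂ in a..b, midpointCov a b r s₁ s₂ =
      (1/(r + 1) - 1/((r + 2) * (r + 1)) - 1/4) * (b - a) ^ (r + 2) := by
  rw [integral_congr fun s₁ hs₁ => integral_midpointCov_snd hr (uIcc_of_le hab ▸ hs₁),
    integral_sub, integral_add, integral_const_mul, integral_add, integral_const_mul,
    integral_const_mul, integral_add, integral_div, integral_div, integral_div, integral_div,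
    integral_add, integral_const, integral_const, smul_eq_mul, smul_eq_mul,
    integral_sub_const_rpow (by linarith), integral_const_sub_rpow (by linarith),
    integral_sub_const_rpow (by linarith), integral_const_sub_rpow (by linarith)]
  · have hΔ : 0 ≤ b - a := sub_nonneg.2 hab
    rw [show r + 2 = r + 1 + 1 by ring, Real.rpow_add_one' (y := r + 1) hΔ (by linarith),
      Real.rpow_add_one' (y := r) hΔ (by linarith)]
    field_simp
    ring
  all_goals
    apply Continuous.intervalIntegrable
    fun_prop (disch := linarith)

end

theorem stmt_14_general (H : ℝ) (hH : H ∈ Set.Ioo (1/2 : ℝ) 1) (n j : ℕ) :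
    ∫ s₁ in ((j:ℝ)/n)..(((j:ℝ)+1)/n), ∫ s₂ in ((j:ℝ)/n)..(((j:ℝ)+1)/n),
        (-(1/4) * ((1:ℝ)/n) ^ (2*H)
          + (1/4) * ((s₂ - (j:ℝ)/n) ^ (2*H) + ((((j:ℝ)+1)/n) - s₂) ^ (2*H)
              + (s₁ - (j:ℝ)/n) ^ (2*H) + ((((j:ℝ)+1)/n) - s₁) ^ (2*H))
          - (1/2) * |s₁ - s₂| ^ (2*H))
      = (1/(2*H + 1) - 1/((2*H + 2) * (2*H + 1)) - 1/4) * (n:ℝ) ^ (-(2*H) - 2) := by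
  have hcell : ((j:ℝ)+1)/n - (j:ℝ)/n = 1/n := by ring
  have h := integral_integral_midpointCov (a := (j:ℝ)/n) (b := ((j:ℝ)+1)/n) (r := 2*H)
    (by linarith [hH.1]) (div_le_div_of_nonneg_right (by linarith) n.cast_nonneg)
  simp only [midpointCov, hcell] at h
  rw [h]
  congr 1
  rw [one_div, Real.inv_rpow n.cast_nonneg, ← Real.rpow_neg n.cast_nonneg, neg_add']

/-- Explicit evaluation of the diagonal double integral of `θ(s₁,s₂)`. -/
theorem stmt_14 (H : ℝ) (hH : H ∈ Set.Ioo (1/2 : ℝ) 1) (n j : ℕ) (hn : 0 < n) :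
    ∫ s₁ in ((j:ℝ)/n)..(((j:ℝ)+1)/n), ∫ s₂ in ((j:ℝ)/n)..(((j:ℝ)+1)/n),
        (-(1/4) * ((1:ℝ)/n) ^ (2*H)
          + (1/4) * ((s₂ - (j:ℝ)/n) ^ (2*H) + ((((j:ℝ)+1)/n) - s₂) ^ (2*H)
              + (s₁ - (j:ℝ)/n) ^ (2*H) + ((((j:ℝ)+1)/n) - s₁) ^ (2*H))
          - (1/2) * |s₁ - s₂| ^ (2*H))
      = (1/(2*H + 1) - 1/((2*H + 2) * (2*H + 1)) - 1/4) * (n:ℝ) ^ (-(2*H) - 2) :=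
  stmt_14_general H hH n j
end

section
/- For H ∈ (1/2, 1) and r ∈ ℕ, define C₀(r) = −(1/4)(r+1)^{2H} + (1/4)r^{2H} − Σ_{k=1}^r k^{2H} + [( r+1)^{2H+1} + r^{2H+1}]/(2H+1) + [r^{2H+2} − (r+1)^{2H+2}]/((2H+1)(2H+2)). Then lim_{r→∞} C₀(r) = −ζ(−2H), where ζ is the Riemann zeta function. -/
/-!
Euler–Maclaurin summation with the kernel `B₃/3!` writes
`(1 - z) (∑_{k ≤ N} k^(-z) - N^(1-z)/(1 - z) - N^(-z)/2 + z N^(-z-1)/12)`, up to a term `c(z)`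
independent of `N`, as a partial sum of remainders of size `O(j ^ (-Re z - 3))`. These sums
converge locally uniformly on `Re z > -2` to a holomorphic function, which agrees with
`(1 - z) ζ(z) + c(z)` on `Re z > 1`, where the partial sums of `ζ` converge; by the identity
theorem they agree on all of `Re z > -2`. At `z = -2H` this is the expansion
`∑_{k ≤ r} k^(2H) = ζ(-2H) + r^(2H+1)/(2H+1) + r^(2H)/2 + (H/6) r^(2H-1) + o(1)`, and `C₀(r)` is
minus its remainder plus `∫₀¹ (t³/6 - t/4 + 1/12) f''(r + t) dt` with `f(x) = x^(2H)`, which is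
`O(r^(2H-2))`.
-/

open Filter Topology Set

-- `B₃(t) / 3!`, the kernel of the third-order Euler–Maclaurin formula.
noncomputable def bernoulliKernel (t : ℝ) : ℝ := (2 * t ^ 3 - 3 * t ^ 2 + t) / 12

theorem abs_bernoulliKernel_le_one {t : ℝ} (ht₀ : 0 ≤ t) (ht₁ : t ≤ 1) :
    |bernoulliKernel t| ≤ 1 := by
  rw [bernoulliKernel, abs_le]; constructor <;> nlinarith

theorem integral_bernoulliKernel_smul {E : Type*} [NormedAddCommGroup E] [NormedSpace ℝ E]
    [CompleteSpace E] {F f f' f'' f''' : ℝ → E}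
    (hF : ∀ t ∈ uIcc (0 : ℝ) 1, HasDerivAt F (f t) t)
    (hf : ∀ t ∈ uIcc (0 : ℝ) 1, HasDerivAt f (f' t) t)
    (hf' : ∀ t ∈ uIcc (0 : ℝ) 1, HasDerivAt f' (f'' t) t)
    (hf'' : ∀ t ∈ uIcc (0 : ℝ) 1, HasDerivAt f'' (f''' t) t)
    (hf''' : ContinuousOn f''' (uIcc 0 1)) :
    ∫ t in (0 : ℝ)..1, bernoulliKernel t • f''' t
      = (2 : ℝ)⁻¹ • (f 0 + f 1) - (12 : ℝ)⁻¹ • (f' 1 - f' 0) - (F 1 - F 0) := by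
  have hint : IntervalIntegrable (fun t => bernoulliKernel t • f''' t) MeasureTheory.volume 0 1 :=
    (hf'''.intervalIntegrable).continuousOn_smul (by unfold bernoulliKernel; fun_prop)
  have hB3 (t : ℝ) : HasDerivAt bernoulliKernel ((t ^ 2 - t + 1 / 6) / 2) t :=
    ((((hasDerivAt_pow 3 t).const_mul 2).sub ((hasDerivAt_pow 2 t).const_mul 3)).add
      (hasDerivAt_id t)).div_const 12 |>.congr_deriv (by simp; ring)
  have hB2 (t : ℝ) : HasDerivAt (fun t : ℝ => (t ^ 2 - t + 1 / 6) / 2) (t - 1 / 2) t :=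
    (((hasDerivAt_pow 2 t).sub (hasDerivAt_id t)).add_const (1 / 6)).div_const 2
      |>.congr_deriv (by simp; ring)
  have hB1 (t : ℝ) : HasDerivAt (fun t : ℝ => t - 1 / 2) 1 t := (hasDerivAt_id t).sub_const _
  rw [intervalIntegral.integral_eq_sub_of_hasDerivAt (f := fun t => bernoulliKernel t • f'' t
    - ((t ^ 2 - t + 1 / 6) / 2) • f' t + (t - 1 / 2) • f t - F t) (fun t ht => ?_) hint]
  · norm_num [bernoulliKernel]
    module
  · exact ((((hB3 t).smul (hf'' t ht)).sub ((hB2 t).smul (hf' t ht))).add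
      ((hB1 t).smul (hf t ht))).sub (hF t ht) |>.congr_deriv (by module)

theorem hasDerivAt_ofReal_add_cpow {a t : ℝ} (h : 0 < a + t) (w : ℂ) :
    HasDerivAt (fun t : ℝ => ((a + t : ℝ) : ℂ) ^ w) (w * ((a + t : ℝ) : ℂ) ^ (w - 1)) t := by
  simpa using ((Complex.hasStrictDerivAt_cpow_const
    (Complex.ofReal_mem_slitPlane.2 h)).hasDerivAt.comp_ofReal).comp_const_add a t

theorem summable_natCast_add_one_rpow {p : ℝ} (hp : p < -1) :
    Summable fun j : ℕ => ((j : ℝ) + 1) ^ p := by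
  simpa using (summable_nat_add_iff 1).2 (Real.summable_nat_rpow.2 hp)

theorem tendsto_natCast_cpow_atTop_zero {w : ℂ} (hw : w.re < 0) :
    Tendsto (fun N : ℕ => (N : ℂ) ^ w) atTop (𝓝 0) := by
  refine squeeze_zero_norm' ?_ ((tendsto_rpow_neg_atTop (neg_pos.2 hw)).comp
    tendsto_natCast_atTop_atTop)
  filter_upwards [eventually_ne_atTop 0] with N hN
  simp [Complex.norm_natCast_cpow_of_pos (Nat.pos_of_ne_zero hN)]

theorem tendsto_sum_Icc_natCast_cpow_neg {z : ℂ} (hz : 1 < z.re) :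
    Tendsto (fun N : ℕ => ∑ k ∈ Finset.Icc 1 N, (k : ℂ) ^ (-z)) atTop (𝓝 (riemannZeta z)) := by
  refine ((tendsto_add_atTop_iff_nat 1).2 (LSeriesHasSum_one hz).tendsto_sum_nat).congr
    fun N => ?_
  rw [Finset.range_eq_Ico, Finset.sum_eq_sum_Ico_succ_bot (by omega), LSeries.term_zero, zero_add,
    zero_add, Finset.Ico_add_one_right_eq_Icc]
  refine Finset.sum_congr rfl fun k hk => ?_
  rw [LSeries.term_of_ne_zero (by grind), Complex.cpow_neg, Pi.one_apply, one_div]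

-- Mathlib gives `ζ 1` a finite junk value, so `(1 - s) * ζ s` vanishes at `1`; the update puts the
-- limit `-1` (minus the residue) there.
theorem differentiable_update_one_sub_mul_riemannZeta :
    Differentiable ℂ (Function.update (fun s => (1 - s) * riemannZeta s) 1 (-1)) := by
  rw [← differentiableOn_univ, ← Complex.differentiableOn_compl_singleton_and_continuousAt_iff
    univ_mem]
  constructor
  · intro s hs
    have hs1 : s ≠ 1 := hs.2
    have hζ := differentiableAt_riemannZeta hs1
    have hd : DifferentiableAt ℂ (fun s => (1 - s) * riemannZeta s) s := by fun_prop
    refine (hd.congr_of_eventuallyEq ?_).differentiableWithinAt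
    filter_upwards [eventually_ne_nhds hs1] with w hw
    exact Function.update_of_ne hw _ _
  · rw [continuousAt_update_same]
    simpa [neg_sub, ← neg_mul] using riemannZeta_residue_one.neg

noncomputable def zetaEulerMaclaurin (N : ℕ) (z : ℂ) : ℂ :=
  (1 - z) * (∑ k ∈ Finset.Icc 1 N, (k : ℂ) ^ (-z) - (1 + (N : ℂ) ^ (-z)) / 2
    + z * ((N : ℂ) ^ (-z - 1) - 1) / 12) - ((N : ℂ) ^ (1 - z) - 1)

-- The Euler–Maclaurin remainder of `x ↦ (1 - z) x ^ (-z)` on `[j + 1, j + 2]`. The factor `1 - z`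
-- keeps the antiderivative `x ^ (1 - z)` regular at `z = 1`.
noncomputable def zetaEulerMaclaurinTerm (z : ℂ) (j : ℕ) : ℂ :=
  ∫ t in (0 : ℝ)..1, bernoulliKernel t •
    ((1 - z) * (-z) * (-z - 1) * (-z - 2) * ((j + 1 + t : ℝ) : ℂ) ^ (-z - 3))

theorem zetaEulerMaclaurinTerm_eq (z : ℂ) (j : ℕ) :
    zetaEulerMaclaurinTerm z j = zetaEulerMaclaurin (j + 2) z - zetaEulerMaclaurin (j + 1) z := by
  have hd (c w : ℂ) (t : ℝ) (ht : t ∈ uIcc (0 : ℝ) 1) :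
      HasDerivAt (fun t : ℝ => c * ((j + 1 + t : ℝ) : ℂ) ^ w)
        (c * w * ((j + 1 + t : ℝ) : ℂ) ^ (w - 1)) t := by
    have : 0 < (j + 1 : ℝ) + t := by
      rw [uIcc_of_le zero_le_one] at ht; linarith [ht.1, (j.cast_nonneg : (0 : ℝ) ≤ j)]
    simpa only [mul_assoc] using (hasDerivAt_ofReal_add_cpow this w).const_mul c
  rw [zetaEulerMaclaurinTerm, integral_bernoulliKernel_smul
    (fun t ht => (hd 1 (1 - z) t ht).congr_deriv (by ring_nf)) (hd (1 - z) (-z))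
    (fun t ht => (hd ((1 - z) * (-z)) (-z - 1) t ht).congr_deriv (by ring_nf))
    (fun t ht => (hd ((1 - z) * (-z) * (-z - 1)) (-z - 2) t ht).congr_deriv (by ring_nf))
    (fun t ht => (hd ((1 - z) * (-z) * (-z - 1) * (-z - 2)) (-z - 3) t ht).continuousAt
      |>.continuousWithinAt), zetaEulerMaclaurin, zetaEulerMaclaurin,
    Finset.sum_Icc_succ_top (by omega)]
  simp only [Complex.real_smul]
  push_cast
  ring_nf

theorem zetaEulerMaclaurin_succ_eq_sum (z : ℂ) (n : ℕ) :
    zetaEulerMaclaurin (n + 1) z = ∑ j ∈ Finset.range n, zetaEulerMaclaurinTerm z j := by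
  have h1 : zetaEulerMaclaurin 1 z = 0 := by simp [zetaEulerMaclaurin]
  simp_rw [zetaEulerMaclaurinTerm_eq, Finset.sum_range_sub (fun j => zetaEulerMaclaurin (j + 1) z),
    h1, sub_zero]

theorem norm_zetaEulerMaclaurinTerm_le {z : ℂ} {σ M : ℝ} (hσ : -3 ≤ σ) (hz : σ ≤ z.re)
    (hM : ‖z‖ ≤ M) (j : ℕ) :
    ‖zetaEulerMaclaurinTerm z j‖ ≤ (M + 2) ^ 4 * ((j : ℝ) + 1) ^ (-σ - 3) := by
  have hM2 : 0 ≤ M + 2 := by linarith [norm_nonneg z]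
  have hpoly : ‖(1 - z) * (-z) * (-z - 1) * (-z - 2)‖ ≤ (M + 2) ^ 4 := by
    have h1 : ‖1 - z‖ ≤ M + 2 := (norm_sub_le _ _).trans (by simp; linarith)
    have h2 : ‖-z‖ ≤ M + 2 := by rw [norm_neg]; linarith
    have h3 : ‖-z - 1‖ ≤ M + 2 := (norm_sub_le _ _).trans (by simp; linarith)
    have h4 : ‖-z - 2‖ ≤ M + 2 := (norm_sub_le _ _).trans (by simp; linarith)
    simp only [norm_mul, pow_succ, pow_zero, one_mul]
    gcongr
  have hj : (1 : ℝ) ≤ j + 1 := by simp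
  rw [zetaEulerMaclaurinTerm]
  refine (intervalIntegral.norm_integral_le_of_norm_le_const
    (C := (M + 2) ^ 4 * ((j : ℝ) + 1) ^ (-σ - 3)) fun t ht => ?_).trans_eq (by simp)
  rw [uIoc_of_le zero_le_one] at ht
  have hpow : ‖((j + 1 + t : ℝ) : ℂ) ^ (-z - 3)‖ ≤ ((j : ℝ) + 1) ^ (-σ - 3) := by
    rw [Complex.norm_cpow_eq_rpow_re_of_pos (by linarith [ht.1])]
    calc ((j : ℝ) + 1 + t) ^ (-z - 3).re ≤ ((j : ℝ) + 1 + t) ^ (-σ - 3) :=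
          Real.rpow_le_rpow_of_exponent_le (by linarith [ht.1]) (by simp; linarith)
      _ ≤ ((j : ℝ) + 1) ^ (-σ - 3) :=
          Real.rpow_le_rpow_of_nonpos (by linarith) (by linarith [ht.1]) (by linarith)
  rw [norm_smul, norm_mul, Real.norm_eq_abs]
  calc |bernoulliKernel t| * (‖(1 - z) * (-z) * (-z - 1) * (-z - 2)‖
        * ‖((j + 1 + t : ℝ) : ℂ) ^ (-z - 3)‖) ≤ 1 * ((M + 2) ^ 4 * ((j : ℝ) + 1) ^ (-σ - 3)) := by
        gcongr; exact abs_bernoulliKernel_le_one ht.1.le ht.2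
    _ = _ := one_mul _

theorem differentiable_zetaEulerMaclaurin {N : ℕ} (hN : N ≠ 0) :
    Differentiable ℂ (zetaEulerMaclaurin N) := by
  have hcpow (k : ℕ) (hk : k ≠ 0) {f : ℂ → ℂ} (hf : Differentiable ℂ f) :
      Differentiable ℂ fun z => (k : ℂ) ^ f z :=
    fun z => (hf z).const_cpow (.inl (by exact_mod_cast hk))
  unfold zetaEulerMaclaurin
  have := hcpow N hN (f := fun z => -z) (by fun_prop)
  have := hcpow N hN (f := fun z => -z - 1) (by fun_prop)
  have := hcpow N hN (f := fun z => 1 - z) (by fun_prop)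
  have : Differentiable ℂ fun z : ℂ => ∑ k ∈ Finset.Icc 1 N, (k : ℂ) ^ (-z) :=
    Differentiable.fun_sum fun k hk =>
      hcpow k (by have := (Finset.mem_Icc.1 hk).1; omega) (by fun_prop)
  fun_prop

theorem differentiableOn_tsum_zetaEulerMaclaurinTerm :
    DifferentiableOn ℂ (fun z => ∑' j, zetaEulerMaclaurinTerm z j) {z | -2 < z.re} := by
  intro z hz
  obtain ⟨σ, hσ, hσz⟩ := exists_between (α := ℝ) hz
  have hU : IsOpen {w : ℂ | σ < w.re ∧ ‖w‖ < ‖z‖ + 1} :=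
    (isOpen_lt continuous_const Complex.continuous_re).inter
      (isOpen_lt continuous_norm continuous_const)
  have hzU : z ∈ {w : ℂ | σ < w.re ∧ ‖w‖ < ‖z‖ + 1} := ⟨hσz, by linarith⟩
  refine (Complex.differentiableOn_tsum_of_summable_norm
    ((summable_natCast_add_one_rpow (p := -σ - 3) (by linarith)).mul_left ((‖z‖ + 1 + 2) ^ 4))
    (fun j => ?_) hU (fun j w hw => norm_zetaEulerMaclaurinTerm_le (by linarith) hw.1.le hw.2.le j)
    |>.differentiableAt (hU.mem_nhds hzU)).differentiableWithinAt
  simp_rw [zetaEulerMaclaurinTerm_eq]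
  exact ((differentiable_zetaEulerMaclaurin (by omega)).sub
    (differentiable_zetaEulerMaclaurin (by omega))).differentiableOn

theorem tendsto_zetaEulerMaclaurin {z : ℂ} (hz : -2 < z.re) :
    Tendsto (fun N => zetaEulerMaclaurin N z) atTop (𝓝 (∑' j, zetaEulerMaclaurinTerm z j)) := by
  have hsum : Summable (zetaEulerMaclaurinTerm z) :=
    .of_norm_bounded ((summable_natCast_add_one_rpow (p := -z.re - 3) (by linarith)).mul_left _)
      (norm_zetaEulerMaclaurinTerm_le (by linarith) le_rfl le_rfl)
  refine (tendsto_add_atTop_iff_nat 1).1 ?_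
  simpa only [zetaEulerMaclaurin_succ_eq_sum] using hsum.hasSum.tendsto_sum_nat

theorem tendsto_zetaEulerMaclaurin_of_one_lt_re {z : ℂ} (hz : 1 < z.re) :
    Tendsto (fun N => zetaEulerMaclaurin N z) atTop
      (𝓝 ((1 - z) * riemannZeta z - (1 - z) / 2 - (1 - z) * z / 12 + 1)) := by
  have h₁ := tendsto_natCast_cpow_atTop_zero (w := -z) (by simp; linarith)
  have h₂ := tendsto_natCast_cpow_atTop_zero (w := -z - 1) (by simp; linarith)
  have h₃ := tendsto_natCast_cpow_atTop_zero (w := 1 - z) (by simp; linarith)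
  rw [show (1 - z) * riemannZeta z - (1 - z) / 2 - (1 - z) * z / 12 + 1
    = (1 - z) * (riemannZeta z - (1 + 0) / 2 + z * (0 - 1) / 12) - (0 - 1) by ring]
  exact (((tendsto_sum_Icc_natCast_cpow_neg hz).sub ((h₁.const_add 1).div_const 2)).add
    (((h₂.sub_const 1).const_mul z).div_const 12)).const_mul (1 - z) |>.sub (h₃.sub_const 1)

theorem tsum_zetaEulerMaclaurinTerm_eq {z : ℂ} (hz : -2 < z.re) (hz1 : z ≠ 1) :
    ∑' j, zetaEulerMaclaurinTerm z j
      = (1 - z) * riemannZeta z - (1 - z) / 2 - (1 - z) * z / 12 + 1 := by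
  set G : ℂ → ℂ := fun w => Function.update (fun s => (1 - s) * riemannZeta s) 1 (-1) w
    - (1 - w) / 2 - (1 - w) * w / 12 + 1
  have hW : IsOpen {w : ℂ | -2 < w.re} := isOpen_lt continuous_const Complex.continuous_re
  have hG : Differentiable ℂ G := by
    have := differentiable_update_one_sub_mul_riemannZeta
    fun_prop
  have hEq : EqOn (fun w => ∑' j, zetaEulerMaclaurinTerm w j) G {w | -2 < w.re} := by
    refine AnalyticOnNhd.eqOn_of_preconnected_of_eventuallyEq
      (differentiableOn_tsum_zetaEulerMaclaurinTerm.analyticOnNhd hW)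
      (hG.differentiableOn.analyticOnNhd hW) (convex_halfSpace_re_gt (-2)).isPreconnected
      (z₀ := 2) (by simp) ?_
    filter_upwards [(isOpen_lt continuous_const Complex.continuous_re).mem_nhds
      (by simp : (1 : ℝ) < (2 : ℂ).re)] with w hw
    have hw1 : w ≠ 1 := by rintro rfl; norm_num at hw
    rw [tendsto_nhds_unique (tendsto_zetaEulerMaclaurin (by linarith))
      (tendsto_zetaEulerMaclaurin_of_one_lt_re hw)]
    simp only [G, Function.update_of_ne hw1]
  simpa [G, Function.update_of_ne hz1] using hEq hz

theorem tendsto_sum_natCast_cpow_sub {z : ℂ} (hz : -2 < z.re) (hz1 : z ≠ 1) :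
    Tendsto (fun N : ℕ => ∑ k ∈ Finset.Icc 1 N, (k : ℂ) ^ (-z) - (N : ℂ) ^ (1 - z) / (1 - z)
      - (N : ℂ) ^ (-z) / 2 + z / 12 * (N : ℂ) ^ (-z - 1)) atTop (𝓝 (riemannZeta z)) := by
  have h1z : 1 - z ≠ 0 := sub_ne_zero.2 (Ne.symm hz1)
  have := ((tendsto_zetaEulerMaclaurin hz).div_const (1 - z)).add_const
    (1 / 2 + z / 12 - 1 / (1 - z))
  rw [tsum_zetaEulerMaclaurinTerm_eq hz hz1] at this
  convert this using 1
  · funext N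
    simp only [zetaEulerMaclaurin]
    field_simp
    ring
  · congr 1
    field_simp
    ring

theorem tendsto_sum_natCast_rpow_sub {s : ℝ} (hs : s < 2) (hs1 : s ≠ -1) :
    Tendsto (fun N : ℕ => ((∑ k ∈ Finset.Icc 1 N, (k : ℝ) ^ s - (N : ℝ) ^ (s + 1) / (s + 1)
      - (N : ℝ) ^ s / 2 - s / 12 * (N : ℝ) ^ (s - 1) : ℝ) : ℂ)) atTop
      (𝓝 (riemannZeta ((-s : ℝ) : ℂ))) := by
  convert tendsto_sum_natCast_cpow_sub (z := ((-s : ℝ) : ℂ)) (by simp; linarith)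
    (by exact_mod_cast (by intro h; apply hs1; linarith : -s ≠ 1)) using 2 with N
  push_cast
  simp only [Complex.ofReal_cpow (Nat.cast_nonneg _)]
  push_cast
  ring_nf

-- The Peano kernel of the functional on the right-hand side, which vanishes on affine `f`.
theorem integral_peanoKernel_mul {G F f f' f'' : ℝ → ℝ}
    (hG : ∀ t ∈ uIcc (0 : ℝ) 1, HasDerivAt G (F t) t)
    (hF : ∀ t ∈ uIcc (0 : ℝ) 1, HasDerivAt F (f t) t)
    (hf : ∀ t ∈ uIcc (0 : ℝ) 1, HasDerivAt f (f' t) t)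
    (hf' : ∀ t ∈ uIcc (0 : ℝ) 1, HasDerivAt f' (f'' t) t)
    (hf'' : ContinuousOn f'' (uIcc 0 1)) :
    ∫ t in (0 : ℝ)..1, (t ^ 3 / 6 - t / 4 + 1 / 12) * f'' t
      = -(f 0 + f 1) / 4 - f' 0 / 12 + F 1 - (G 1 - G 0) := by
  have hint : IntervalIntegrable (fun t => (t ^ 3 / 6 - t / 4 + 1 / 12) * f'' t)
      MeasureTheory.volume 0 1 :=
    ((continuous_id.pow 3).div_const 6 |>.sub (continuous_id.div_const 4) |>.add
      continuous_const).continuousOn.mul hf'' |>.intervalIntegrable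
  have hK (t : ℝ) : HasDerivAt (fun t : ℝ => t ^ 3 / 6 - t / 4 + 1 / 12) (t ^ 2 / 2 - 1 / 4) t :=
    (((hasDerivAt_pow 3 t).div_const 6).sub ((hasDerivAt_id t).div_const 4)).add_const _
      |>.congr_deriv (by simp; ring)
  have hK' (t : ℝ) : HasDerivAt (fun t : ℝ => t ^ 2 / 2 - 1 / 4) t t :=
    ((hasDerivAt_pow 2 t).div_const 2).sub_const _ |>.congr_deriv (by simp)
  rw [intervalIntegral.integral_eq_sub_of_hasDerivAt (f := fun t => (t ^ 3 / 6 - t / 4 + 1 / 12)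
    * f' t - (t ^ 2 / 2 - 1 / 4) * f t + t * F t - G t) (fun t ht => ?_) hint]
  · ring
  · exact ((((hK t).mul (hf' t ht)).sub ((hK' t).mul (hf t ht))).add
      ((hasDerivAt_id t).mul (hF t ht))).sub (hG t ht) |>.congr_deriv (by simp; ring)

theorem integral_peanoKernel_mul_rpow {a s : ℝ} (ha : 0 < a) (hs1 : s ≠ -1) (hs2 : s ≠ -2) :
    ∫ t in (0 : ℝ)..1, (t ^ 3 / 6 - t / 4 + 1 / 12) * (s * (s - 1) * (a + t) ^ (s - 2))
      = -((a + 1) ^ s + a ^ s) / 4 - s / 12 * a ^ (s - 1) + (a + 1) ^ (s + 1) / (s + 1)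
        + (a ^ (s + 2) - (a + 1) ^ (s + 2)) / ((s + 1) * (s + 2)) := by
  have hs1' : s + 1 ≠ 0 := by intro h; apply hs1; linarith
  have hs2' : s + 2 ≠ 0 := by intro h; apply hs2; linarith
  have hd (c p t : ℝ) (ht : t ∈ uIcc (0 : ℝ) 1) :
      HasDerivAt (fun t : ℝ => c * (a + t) ^ p) (c * p * (a + t) ^ (p - 1)) t := by
    have : 0 < a + t := by rw [uIcc_of_le zero_le_one] at ht; linarith [ht.1]
    simpa only [mul_assoc] using
      ((Real.hasDerivAt_rpow_const (.inl this.ne')).comp_const_add a t).const_mul c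
  rw [integral_peanoKernel_mul
    (fun t ht => (hd (1 / ((s + 1) * (s + 2))) (s + 2) t ht).congr_deriv
      (by rw [show s + 2 - 1 = s + 1 by ring]; field_simp))
    (fun t ht => (hd (1 / (s + 1)) (s + 1) t ht).congr_deriv
      (by rw [show s + 1 - 1 = s by ring]; field_simp))
    (hd 1 s) (fun t ht => (hd (1 * s) (s - 1) t ht).congr_deriv (by ring_nf))
    (fun t ht => (hd (s * (s - 1)) (s - 2) t ht).continuousAt.continuousWithinAt)]
  simp only [add_zero]
  field_simp
  ring

theorem abs_peanoKernel_le_one {t : ℝ} (ht₀ : 0 ≤ t) (ht₁ : t ≤ 1) :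
    |t ^ 3 / 6 - t / 4 + 1 / 12| ≤ 1 := by
  have : t ^ 3 ≤ 1 := pow_le_one₀ ht₀ ht₁
  rw [abs_le]; constructor <;> nlinarith [pow_nonneg ht₀ 3]

theorem tendsto_rpow_peanoRemainder {s : ℝ} (hs : s < 2) (hs1 : s ≠ -1) (hs2 : s ≠ -2) :
    Tendsto (fun r : ℕ => -(((r : ℝ) + 1) ^ s + (r : ℝ) ^ s) / 4 - s / 12 * (r : ℝ) ^ (s - 1)
      + ((r : ℝ) + 1) ^ (s + 1) / (s + 1)
      + ((r : ℝ) ^ (s + 2) - ((r : ℝ) + 1) ^ (s + 2)) / ((s + 1) * (s + 2))) atTop (𝓝 0) := by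
  refine squeeze_zero_norm' (a := fun r : ℕ => |s * (s - 1)| * (r : ℝ) ^ (s - 2)) ?_ ?_
  · filter_upwards [eventually_ge_atTop 1] with r hr
    have hr : (1 : ℝ) ≤ r := by exact_mod_cast hr
    rw [← integral_peanoKernel_mul_rpow (by linarith) hs1 hs2]
    refine (intervalIntegral.norm_integral_le_of_norm_le_const
      (C := |s * (s - 1)| * (r : ℝ) ^ (s - 2)) fun t ht => ?_).trans_eq (by simp)
    rw [uIoc_of_le zero_le_one] at ht
    have hpow₀ : 0 ≤ ((r : ℝ) + t) ^ (s - 2) := Real.rpow_nonneg (by linarith [ht.1]) _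
    have hpow : ((r : ℝ) + t) ^ (s - 2) ≤ (r : ℝ) ^ (s - 2) :=
      Real.rpow_le_rpow_of_nonpos (by linarith) (by linarith [ht.1]) (by linarith)
    rw [norm_mul, Real.norm_eq_abs, Real.norm_eq_abs, abs_mul, abs_of_nonneg hpow₀]
    calc |t ^ 3 / 6 - t / 4 + 1 / 12| * (|s * (s - 1)| * ((r : ℝ) + t) ^ (s - 2))
        ≤ 1 * (|s * (s - 1)| * (r : ℝ) ^ (s - 2)) := by
          gcongr; exact abs_peanoKernel_le_one ht.1.le ht.2
      _ = _ := one_mul _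
  · simpa [neg_sub, Function.comp_def] using ((tendsto_rpow_neg_atTop (sub_pos.2 hs)).comp
      tendsto_natCast_atTop_atTop).const_mul |s * (s - 1)|

/-- The diagonal constants `C₀(r)` converge to `−ζ(−2H)`. -/
theorem stmt_15 (H : ℝ) (hH : H ∈ Set.Ioo (1/2 : ℝ) 1) :
    Tendsto (fun r : ℕ =>
        ((-(1/4) * ((r:ℝ) + 1) ^ (2*H) + (1/4) * (r:ℝ) ^ (2*H)
          - (∑ k ∈ Finset.Icc 1 r, (k:ℝ) ^ (2*H))
          + (((r:ℝ) + 1) ^ (2*H + 1) + (r:ℝ) ^ (2*H + 1)) / (2*H + 1)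
          + ((r:ℝ) ^ (2*H + 2) - ((r:ℝ) + 1) ^ (2*H + 2)) / ((2*H + 1) * (2*H + 2)) : ℝ)
            : ℂ))
      atTop (nhds (-riemannZeta ((-(2*H) : ℝ) : ℂ))) := by
  obtain ⟨hH₁, hH₂⟩ := hH
  have hs : 2 * H < 2 := by linarith
  have hs₁ : 2 * H ≠ -1 := ne_of_gt (by linarith)
  have hD := (Complex.continuous_ofReal.tendsto 0).comp
    (tendsto_rpow_peanoRemainder hs hs₁ (ne_of_gt (by linarith)))
  convert hD.sub (tendsto_sum_natCast_rpow_sub hs hs₁) using 2 with r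
  · simp only [Function.comp_apply, ← Complex.ofReal_sub]
    congr 1
    ring
  · simp
end
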